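/- arXiv:2012.05169 — 3 statements merged into one kernel-verified Lean document; each statement's English description precedes it below -/
import Mathlib

section
/- Let Y ∈ ℝ^{n×d} be a data matrix, x* ∈ ℝ^n a label vector, and β > 0. Let D_1, …, D_ℓ enumerate the set of ReLU sign-pattern matrices of Y. Let p*_m denote the optimal value of the non-convex primal training problem with m neurons, and let d* denote the optimal value of the convex dual program: d* = inf over (w_i, z_i)_{i=1}^ℓ in ℝ^d with (2D_i − I)Y w_i ≥ 0 and (2D_i − I)Y z_i ≥ 0 componentwise for every i, of (1/2)‖Σ_{i=1}^ℓ D_i Y (w_i − z_i) − x*‖_2² + β Σ_{i=1}^ℓ (‖w_i‖_2 + ‖z_i‖_2). Then there exists m* ≤ n such that for every m ≥ m* + 1, p*_m = d*. -/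
open Matrix Finset

noncomputable section

/-- Euclidean (ℓ2) norm of a vector in ℝ^k. -/
def l2 {k : ℕ} (x : Fin k → ℝ) : ℝ := Real.sqrt (∑ i, (x i) ^ 2)

/-- Componentwise ReLU. -/
def relu {k : ℕ} (x : Fin k → ℝ) : Fin k → ℝ := fun i => max (x i) 0

/-- The set of ReLU sign-pattern matrices of `Y`: diagonal 0/1 matrices
`Diag(1_{Yu ≥ 0})` as `u` ranges over the closed unit ball. -/
def signPatterns {n d : ℕ} (Y : Matrix (Fin n) (Fin d) ℝ) :
    Set (Matrix (Fin n) (Fin n) ℝ) :=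
  { M | ∃ u : Fin d → ℝ, l2 u ≤ 1 ∧
      M = Matrix.diagonal (fun i => if 0 ≤ Y.mulVec u i then (1 : ℝ) else 0) }

/-- Primal (non-convex) training objective with `m` neurons. -/
def primalObj {n d : ℕ} (Y : Matrix (Fin n) (Fin d) ℝ) (xs : Fin n → ℝ) (β : ℝ)
    (m : ℕ) (u : Fin m → Fin d → ℝ) (v : Fin m → ℝ) : ℝ :=
  (1 / 2) * l2 ((∑ j, v j • relu (Y.mulVec (u j))) - xs) ^ 2
    + (β / 2) * ∑ j, (l2 (u j) ^ 2 + |v j| ^ 2)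

/-- Optimal value of the primal training problem with `m` neurons. -/
def pStar {n d : ℕ} (Y : Matrix (Fin n) (Fin d) ℝ) (xs : Fin n → ℝ) (β : ℝ)
    (m : ℕ) : ℝ :=
  sInf { c | ∃ u : Fin m → Fin d → ℝ, ∃ v : Fin m → ℝ, c = primalObj Y xs β m u v }

/-- Dual feasibility: `(2 Dᵢ − I) Y wᵢ ≥ 0` componentwise for every `i`. -/
def dualFeasible {n d ℓ : ℕ} (Y : Matrix (Fin n) (Fin d) ℝ)
    (D : Fin ℓ → Matrix (Fin n) (Fin n) ℝ) (w : Fin ℓ → Fin d → ℝ) : Prop :=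
  ∀ i j, 0 ≤ ((2 • D i - 1).mulVec (Y.mulVec (w i))) j

/-- Convex dual objective. -/
def dualObj {n d ℓ : ℕ} (Y : Matrix (Fin n) (Fin d) ℝ) (xs : Fin n → ℝ) (β : ℝ)
    (D : Fin ℓ → Matrix (Fin n) (Fin n) ℝ) (w z : Fin ℓ → Fin d → ℝ) : ℝ :=
  (1 / 2) * l2 ((∑ i, (D i).mulVec (Y.mulVec (w i - z i))) - xs) ^ 2
    + β * ∑ i, (l2 (w i) + l2 (z i))

/-- Optimal value of the convex dual program. -/
def dStar {n d ℓ : ℕ} (Y : Matrix (Fin n) (Fin d) ℝ) (xs : Fin n → ℝ) (β : ℝ)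
    (D : Fin ℓ → Matrix (Fin n) (Fin n) ℝ) : ℝ :=
  sInf { c | ∃ w z : Fin ℓ → Fin d → ℝ,
    dualFeasible Y D w ∧ dualFeasible Y D z ∧ c = dualObj Y xs β D w z }

end

/-!
Weak duality: grouping the neurons by sign pattern and by the sign of their output weight turns
a network into a dual-feasible point with the same output, and by AM-GM,
`|v| ‖u‖ ≤ (‖u‖² + v²) / 2`, its dual cost is at most the weight-decay penalty.

Strong duality: the output and cost of a dual-feasible point are the sums of the atoms
`(± relu (Y x), ‖x‖)`. Carathéodory's theorem, applied in `ℝⁿ` to the points `± relu (Y x) / ‖x‖`,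
rewrites them as a nonnegative combination of at most `n + 1` atoms, and a single neuron, rescaled
so that both layers have equal norm, realises a multiple of an atom at penalty twice its cost.
-/

section l2

variable {k : ℕ}

lemma l2_eq_norm (x : Fin k → ℝ) : l2 x = ‖WithLp.toLp 2 x‖ := by
  simp [l2, EuclideanSpace.norm_eq]

lemma l2_nonneg (x : Fin k → ℝ) : 0 ≤ l2 x := Real.sqrt_nonneg _

lemma l2_zero : l2 (0 : Fin k → ℝ) = 0 := by
  simp [l2]

lemma l2_eq_zero {x : Fin k → ℝ} : l2 x = 0 ↔ x = 0 := by
  simp [l2_eq_norm]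

lemma l2_pos {x : Fin k → ℝ} (hx : x ≠ 0) : 0 < l2 x :=
  (l2_nonneg x).lt_of_ne (Ne.symm (mt l2_eq_zero.1 hx))

lemma l2_smul (c : ℝ) (x : Fin k → ℝ) : l2 (c • x) = |c| * l2 x := by
  simp [l2_eq_norm, norm_smul]

lemma l2_sum_le {ι : Type*} (s : Finset ι) (f : ι → Fin k → ℝ) :
    l2 (∑ i ∈ s, f i) ≤ ∑ i ∈ s, l2 (f i) := by
  simpa [l2_eq_norm, WithLp.toLp_sum] using norm_sum_le s fun i => WithLp.toLp 2 (f i)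

lemma relu_zero : relu (0 : Fin k → ℝ) = 0 := by
  ext; simp [relu]

lemma relu_smul {c : ℝ} (hc : 0 ≤ c) (x : Fin k → ℝ) : relu (c • x) = c • relu x := by
  ext i; simp [relu, mul_max_of_nonneg _ _ hc]

end l2

section SignPattern

variable {n d : ℕ} (Y : Matrix (Fin n) (Fin d) ℝ)

noncomputable def signPattern (u : Fin d → ℝ) : Matrix (Fin n) (Fin n) ℝ :=
  diagonal fun i => if 0 ≤ (Y *ᵥ u) i then 1 else 0

lemma signPattern_smul {c : ℝ} (hc : 0 < c) (u : Fin d → ℝ) :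
    signPattern Y (c • u) = signPattern Y u := by
  simp [signPattern, mulVec_smul, mul_nonneg_iff_of_pos_left hc]

lemma signPattern_mem_signPatterns (u : Fin d → ℝ) : signPattern Y u ∈ signPatterns Y := by
  have hu := l2_nonneg u
  have hc : 0 < (1 + l2 u)⁻¹ := by positivity
  refine ⟨(1 + l2 u)⁻¹ • u, ?_, (signPattern_smul Y hc u).symm⟩
  rw [l2_smul, abs_of_pos hc, inv_mul_le_iff₀ (by positivity)]
  linarith

lemma diagonal_indicator_mulVec_eq_relu_iff (p : Fin n → Prop) [DecidablePred p]
    (v : Fin n → ℝ) :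
    diagonal (fun j => if p j then (1 : ℝ) else 0) *ᵥ v = relu v ↔
      0 ≤ (2 • diagonal (fun j => if p j then (1 : ℝ) else 0) - 1) *ᵥ v := by
  rw [funext_iff, Pi.le_def]
  refine forall_congr' fun j => ?_
  by_cases hj : p j <;> simp [hj, relu, mulVec_diagonal, sub_mulVec, two_smul]
  constructor <;> intro <;> linarith

lemma mulVec_eq_relu_of_mem_signPatterns {M : Matrix (Fin n) (Fin n) ℝ}
    (hM : M ∈ signPatterns Y) {v : Fin n → ℝ} (hv : 0 ≤ (2 • M - 1) *ᵥ v) :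
    M *ᵥ v = relu v := by
  obtain ⟨u, -, rfl⟩ := hM
  exact (diagonal_indicator_mulVec_eq_relu_iff _ v).2 hv

lemma signPattern_mulVec (u : Fin d → ℝ) :
    signPattern Y u *ᵥ (Y *ᵥ u) = relu (Y *ᵥ u) := by
  ext j
  by_cases h : 0 ≤ (Y *ᵥ u) j <;> simp [signPattern, relu, mulVec_diagonal, h, le_of_not_ge]

lemma signPattern_feasible (u : Fin d → ℝ) :
    0 ≤ (2 • signPattern Y u - 1) *ᵥ (Y *ᵥ u) :=
  (diagonal_indicator_mulVec_eq_relu_iff _ _).1 (signPattern_mulVec Y u)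

end SignPattern

section Objectives

variable {n d ℓ : ℕ} (Y : Matrix (Fin n) (Fin d) ℝ) (xs : Fin n → ℝ) {β : ℝ}
  (D : Fin ℓ → Matrix (Fin n) (Fin n) ℝ)

lemma primalObj_nonneg (hβ : 0 ≤ β) {m : ℕ} (u : Fin m → Fin d → ℝ) (v : Fin m → ℝ) :
    0 ≤ primalObj Y xs β m u v := by
  unfold primalObj
  positivity

lemma dualObj_nonneg (hβ : 0 ≤ β) (w z : Fin ℓ → Fin d → ℝ) : 0 ≤ dualObj Y xs β D w z := by
  unfold dualObj
  have := sum_nonneg fun i (_ : i ∈ univ) => add_nonneg (l2_nonneg (w i)) (l2_nonneg (z i))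
  positivity

lemma pStar_le_primalObj (hβ : 0 ≤ β) {m : ℕ} (u : Fin m → Fin d → ℝ) (v : Fin m → ℝ) :
    pStar Y xs β m ≤ primalObj Y xs β m u v :=
  csInf_le ⟨0, by rintro _ ⟨u, v, rfl⟩; exact primalObj_nonneg Y xs hβ u v⟩ ⟨u, v, rfl⟩

lemma dStar_le_dualObj (hβ : 0 ≤ β) {w z : Fin ℓ → Fin d → ℝ} (hw : dualFeasible Y D w)
    (hz : dualFeasible Y D z) : dStar Y xs β D ≤ dualObj Y xs β D w z :=
  csInf_le ⟨0, by rintro _ ⟨w, z, -, -, rfl⟩; exact dualObj_nonneg Y xs D hβ w z⟩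
    ⟨w, z, hw, hz, rfl⟩

lemma primalObj_append_zero {r k : ℕ} (u : Fin r → Fin d → ℝ) (v : Fin r → ℝ) :
    primalObj Y xs β (r + k) (Fin.append u 0) (Fin.append v 0) = primalObj Y xs β r u v := by
  simp [primalObj, Fin.sum_univ_add, relu_zero, l2_zero]

lemma pStar_le_primalObj_of_le (hβ : 0 ≤ β) {r m : ℕ} (h : r ≤ m) (u : Fin r → Fin d → ℝ)
    (v : Fin r → ℝ) : pStar Y xs β m ≤ primalObj Y xs β r u v := by
  obtain ⟨k, rfl⟩ := Nat.exists_eq_add_of_le h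
  rw [← primalObj_append_zero]
  exact pStar_le_primalObj Y xs hβ _ _

lemma primalObj_sub_dualObj {m : ℕ} {u : Fin m → Fin d → ℝ} {v : Fin m → ℝ}
    {w z : Fin ℓ → Fin d → ℝ}
    (hout : ∑ j, v j • relu (Y *ᵥ u j) = ∑ i, D i *ᵥ (Y *ᵥ (w i - z i))) :
    primalObj Y xs β m u v - dualObj Y xs β D w z =
      β / 2 * (∑ j, (l2 (u j) ^ 2 + |v j| ^ 2) - 2 * ∑ i, (l2 (w i) + l2 (z i))) := by
  unfold primalObj dualObj
  rw [hout]
  ring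

end Objectives

section DualOfPrimal

variable {n d ℓ m : ℕ} {Y : Matrix (Fin n) (Fin d) ℝ} {D : Fin ℓ → Matrix (Fin n) (Fin n) ℝ}
  (idx : Fin m → Fin ℓ) (u : Fin m → Fin d → ℝ)

noncomputable def groupNeurons (c : Fin m → ℝ) : Fin ℓ → Fin d → ℝ :=
  fun i => ∑ j with idx j = i, c j • u j

lemma groupNeurons_sub (c c' : Fin m → ℝ) :
    groupNeurons idx u c - groupNeurons idx u c' = groupNeurons idx u (c - c') := by
  ext1 i
  simp [groupNeurons, sub_smul]

lemma sum_l2_groupNeurons_le {c : Fin m → ℝ} (hc : 0 ≤ c) :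
    ∑ i, l2 (groupNeurons idx u c i) ≤ ∑ j, c j * l2 (u j) :=
  calc ∑ i, l2 (groupNeurons idx u c i)
      ≤ ∑ i, ∑ j with idx j = i, c j * l2 (u j) := by
        gcongr with i
        refine (l2_sum_le _ _).trans_eq (sum_congr rfl fun j _ => ?_)
        rw [l2_smul, abs_of_nonneg (hc j)]
    _ = ∑ j, c j * l2 (u j) := sum_fiberwise _ _ _

variable {idx u}

lemma dualFeasible_groupNeurons (hidx : ∀ j, D (idx j) = signPattern Y (u j))
    {c : Fin m → ℝ} (hc : 0 ≤ c) : dualFeasible Y D (groupNeurons idx u c) := by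
  intro i
  rw [← Pi.le_def]
  simp only [groupNeurons, mulVec_sum, mulVec_smul]
  refine sum_nonneg fun j hj => smul_nonneg (hc j) ?_
  rw [← (mem_filter.1 hj).2, hidx]
  exact signPattern_feasible Y (u j)

lemma sum_mulVec_groupNeurons (hidx : ∀ j, D (idx j) = signPattern Y (u j)) (c : Fin m → ℝ) :
    ∑ i, D i *ᵥ (Y *ᵥ groupNeurons idx u c i) = ∑ j, c j • relu (Y *ᵥ u j) := by
  rw [← sum_fiberwise univ idx]
  refine sum_congr rfl fun i _ => ?_
  simp only [groupNeurons, mulVec_sum, mulVec_smul]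
  refine sum_congr rfl fun j hj => ?_
  rw [← (mem_filter.1 hj).2, hidx, signPattern_mulVec]

end DualOfPrimal

lemma exists_dualObj_le_primalObj {n d ℓ m : ℕ} (Y : Matrix (Fin n) (Fin d) ℝ)
    (xs : Fin n → ℝ) {β : ℝ} (hβ : 0 ≤ β) {D : Fin ℓ → Matrix (Fin n) (Fin n) ℝ}
    (hD : signPatterns Y ⊆ Set.range D) (u : Fin m → Fin d → ℝ) (v : Fin m → ℝ) :
    ∃ w z, dualFeasible Y D w ∧ dualFeasible Y D z ∧
      dualObj Y xs β D w z ≤ primalObj Y xs β m u v := by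
  choose idx hidx using fun j => hD (signPattern_mem_signPatterns Y (u j))
  set w := groupNeurons idx u v⁺
  set z := groupNeurons idx u v⁻
  have hout : ∑ j, v j • relu (Y *ᵥ u j) = ∑ i, D i *ᵥ (Y *ᵥ (w i - z i)) := by
    have hwz : ∀ i, w i - z i = groupNeurons idx u v i := fun i => by
      rw [← Pi.sub_apply, groupNeurons_sub, posPart_sub_negPart]
    simp only [hwz, sum_mulVec_groupNeurons hidx]
  have hcost : 2 * ∑ i, (l2 (w i) + l2 (z i)) ≤ ∑ j, (l2 (u j) ^ 2 + |v j| ^ 2) :=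
    calc 2 * ∑ i, (l2 (w i) + l2 (z i))
        ≤ 2 * (∑ j, v⁺ j * l2 (u j) + ∑ j, v⁻ j * l2 (u j)) := by
          rw [sum_add_distrib]
          gcongr
          · exact sum_l2_groupNeurons_le idx u (posPart_nonneg v)
          · exact sum_l2_groupNeurons_le idx u (negPart_nonneg v)
      _ = ∑ j, 2 * (|v j| * l2 (u j)) := by
          rw [← sum_add_distrib, mul_sum]
          refine sum_congr rfl fun j _ => ?_
          rw [← add_mul, ← Pi.add_apply, posPart_add_negPart, Pi.abs_apply]
      _ ≤ ∑ j, (l2 (u j) ^ 2 + |v j| ^ 2) := by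
          gcongr with j
          nlinarith [two_mul_le_add_sq |v j| (l2 (u j))]
  refine ⟨w, z, dualFeasible_groupNeurons hidx (posPart_nonneg v),
    dualFeasible_groupNeurons hidx (negPart_nonneg v), ?_⟩
  have := primalObj_sub_dualObj Y xs D (β := β) hout
  nlinarith

section Caratheodory

variable {V : Type*} [AddCommGroup V] [Module ℝ V] {ι : Type*} [Fintype ι]
  (a : ι → V) {t : ι → ℝ}

lemma inv_smul_sum_mem_convexHull (ht : ∀ i, 0 ≤ t i) (ha : ∀ i, t i = 0 → a i = 0)
    (hT : 0 < ∑ i, t i) :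
    (∑ i, t i)⁻¹ • ∑ i, a i ∈ convexHull ℝ (Set.range fun i => (t i)⁻¹ • a i) := by
  have hcomb : (∑ i, t i)⁻¹ • ∑ i, a i = ∑ i, (t i / ∑ i, t i) • ((t i)⁻¹ • a i) := by
    rw [smul_sum]
    refine sum_congr rfl fun i _ => ?_
    by_cases hti : t i = 0
    · simp [hti, ha i hti]
    · rw [smul_smul]
      congr 1
      field_simp
  rw [hcomb]
  exact (convex_convexHull ℝ _).sum_mem (fun i _ => div_nonneg (ht i) hT.le)
    (by rw [← sum_div, div_self hT.ne']) fun i _ => subset_convexHull ℝ _ (Set.mem_range_self i)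

theorem exists_nonneg_comb_card_le_finrank_succ [FiniteDimensional ℝ V]
    (ht : ∀ i, 0 ≤ t i) (ha : ∀ i, t i = 0 → a i = 0) :
    ∃ r ≤ Module.finrank ℝ V + 1, ∃ (k : Fin r → ι) (c : Fin r → ℝ), (∀ j, 0 ≤ c j) ∧
      ∑ j, c j • a (k j) = ∑ i, a i ∧ ∑ j, c j * t (k j) ≤ ∑ i, t i := by
  set T := ∑ i, t i
  rcases (sum_nonneg fun i (_ : i ∈ univ) => ht i).eq_or_lt with hT | hT
  · have ht0 : ∀ i, t i = 0 := fun i =>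
      (sum_eq_zero_iff_of_nonneg fun i _ => ht i).1 hT.symm i (mem_univ i)
    refine ⟨0, Nat.zero_le _, Fin.elim0, Fin.elim0, fun j => j.elim0, ?_, ?_⟩
    · simp [fun i => ha i (ht0 i)]
    · simp [T, ← hT]
  obtain ⟨κ, _, p, μ, hp, hind, hμ, hμ1, hpμ⟩ :=
    eq_pos_convex_span_of_mem_convexHull (inv_smul_sum_mem_convexHull a ht ha hT)
  choose k hk using fun j => hp (Set.mem_range_self j)
  have hcard : Fintype.card κ ≤ Module.finrank ℝ V + 1 :=
    hind.card_le_finrank_succ.trans (by gcongr; exact Submodule.finrank_le _)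
  let e := (Fintype.equivFin κ).symm
  refine ⟨_, hcard, k ∘ e, fun j => T * μ (e j) / t (k (e j)), fun j => by
    have := hμ (e j); have := ht (k (e j)); positivity, ?_, ?_⟩
  · refine (Equiv.sum_comp e fun q => (T * μ q / t (k q)) • a (k q)).trans ?_
    calc ∑ q, (T * μ q / t (k q)) • a (k q) = T • ∑ q, μ q • p q := by
          rw [smul_sum]
          refine sum_congr rfl fun q _ => ?_
          rw [← hk, smul_smul, smul_smul, div_eq_mul_inv, mul_assoc]
      _ = ∑ i, a i := by rw [hpμ, smul_inv_smul₀ hT.ne']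
  -- only `≤`: an index with `t i = 0` may be picked, and then gets the junk weight `_ / 0 = 0`
  · refine (Equiv.sum_comp e fun q => T * μ q / t (k q) * t (k q)).trans_le ?_
    calc ∑ q, T * μ q / t (k q) * t (k q) ≤ ∑ q, T * μ q := by
          refine sum_le_sum fun q _ => ?_
          rcases (ht (k q)).eq_or_lt with h | h
          · rw [← h, div_zero, zero_mul]
            exact (mul_pos hT (hμ q)).le
          · rw [div_mul_cancel₀ _ h.ne']
      _ = T := by rw [← mul_sum, hμ1, mul_one]

end Caratheodory

lemma exists_neuron_eq_smul_relu {n d : ℕ} (Y : Matrix (Fin n) (Fin d) ℝ) (s : ℝ)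
    (y : Fin d → ℝ) :
    ∃ u v, v • relu (Y *ᵥ u) = s • relu (Y *ᵥ y) ∧ l2 u ^ 2 + |v| ^ 2 = 2 * (|s| * l2 y) := by
  by_cases h : s = 0 ∨ y = 0
  · refine ⟨0, 0, ?_, ?_⟩ <;> rcases h with rfl | rfl <;> simp [relu_zero, l2_zero]
  push Not at h
  obtain ⟨hs, hy⟩ := h
  have hy' := l2_pos hy
  -- balance the layers: `u = α y`, `v = s / α` with `α ^ 2 = |s| / ‖y‖`
  set α := Real.sqrt (|s| / l2 y)
  have hα : 0 < α := Real.sqrt_pos.2 (div_pos (abs_pos.2 hs) hy')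
  have hα2 : α ^ 2 = |s| / l2 y := Real.sq_sqrt (by positivity)
  refine ⟨α • y, s / α, ?_, ?_⟩
  · rw [mulVec_smul, relu_smul hα.le, smul_smul, div_mul_cancel₀ _ hα.ne']
  · rw [l2_smul, abs_of_pos hα, abs_div, abs_of_pos hα, mul_pow, div_pow, hα2]
    field_simp
    norm_num

lemma pStar_le_dualObj {n d ℓ m : ℕ} (Y : Matrix (Fin n) (Fin d) ℝ)
    (xs : Fin n → ℝ) {β : ℝ} (hβ : 0 ≤ β) {D : Fin ℓ → Matrix (Fin n) (Fin n) ℝ}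
    (hD : Set.range D ⊆ signPatterns Y) (hm : n + 1 ≤ m) {w z : Fin ℓ → Fin d → ℝ}
    (hw : dualFeasible Y D w) (hz : dualFeasible Y D z) :
    pStar Y xs β m ≤ dualObj Y xs β D w z := by
  let a : Fin ℓ ⊕ Fin ℓ → Fin n → ℝ :=
    Sum.elim (fun i => relu (Y *ᵥ w i)) (fun i => -relu (Y *ᵥ z i))
  let t : Fin ℓ ⊕ Fin ℓ → ℝ := Sum.elim (fun i => l2 (w i)) (fun i => l2 (z i))
  have ht : ∀ k, 0 ≤ t k := by rintro (i | i) <;> exact l2_nonneg _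
  have ha : ∀ k, t k = 0 → a k = 0 := by
    rintro (i | i) h <;> simp_all [a, t, l2_eq_zero, relu_zero]
  obtain ⟨r, hr, k, c, hc, hsum, hcost⟩ := exists_nonneg_comb_card_le_finrank_succ a ht ha
  rw [Module.finrank_fin_fun] at hr
  have hneuron : ∀ j, ∃ u v, v • relu (Y *ᵥ u) = c j • a (k j) ∧
      l2 u ^ 2 + |v| ^ 2 = 2 * (c j * t (k j)) := by
    intro j
    rcases k j with i | i
    · simpa [a, t, abs_of_nonneg (hc j)] using exists_neuron_eq_smul_relu Y (c j) (w i)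
    · simpa [a, t, abs_of_nonneg (hc j)] using exists_neuron_eq_smul_relu Y (-c j) (z i)
  choose u v huv using hneuron
  have hout : ∑ j, v j • relu (Y *ᵥ u j) = ∑ i, D i *ᵥ (Y *ᵥ (w i - z i)) := by
    have hrelu : ∀ i x, dualFeasible Y D x → D i *ᵥ (Y *ᵥ x i) = relu (Y *ᵥ x i) :=
      fun i x hx => mulVec_eq_relu_of_mem_signPatterns Y (hD ⟨i, rfl⟩) (hx i)
    calc ∑ j, v j • relu (Y *ᵥ u j) = ∑ k, a k := by simp only [huv, hsum]
      _ = ∑ i, (relu (Y *ᵥ w i) - relu (Y *ᵥ z i)) := by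
        simp [a, Fintype.sum_sum_type, sub_eq_add_neg, sum_add_distrib]
      _ = ∑ i, D i *ᵥ (Y *ᵥ (w i - z i)) := by
        simp only [mulVec_sub, hrelu _ _ hw, hrelu _ _ hz]
  have hcost' : ∑ j, (l2 (u j) ^ 2 + |v j| ^ 2) ≤ 2 * ∑ i, (l2 (w i) + l2 (z i)) := by
    simp only [huv, ← mul_sum, sum_add_distrib]
    simpa [t, Fintype.sum_sum_type] using hcost
  calc pStar Y xs β m ≤ primalObj Y xs β r u v :=
        pStar_le_primalObj_of_le Y xs hβ (hr.trans hm) u v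
    _ ≤ dualObj Y xs β D w z := by
        have := primalObj_sub_dualObj Y xs D (β := β) hout
        nlinarith

lemma dStar_le_pStar {n d ℓ : ℕ} (Y : Matrix (Fin n) (Fin d) ℝ) (xs : Fin n → ℝ) {β : ℝ}
    (hβ : 0 ≤ β) {D : Fin ℓ → Matrix (Fin n) (Fin n) ℝ} (hD : signPatterns Y ⊆ Set.range D)
    (m : ℕ) : dStar Y xs β D ≤ pStar Y xs β m := by
  refine le_csInf ⟨_, 0, 0, rfl⟩ ?_
  rintro _ ⟨u, v, rfl⟩
  obtain ⟨w, z, hw, hz, hle⟩ := exists_dualObj_le_primalObj Y xs hβ hD u v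
  exact (dStar_le_dualObj Y xs D hβ hw hz).trans hle

lemma pStar_le_dStar {n d ℓ : ℕ} (Y : Matrix (Fin n) (Fin d) ℝ) (xs : Fin n → ℝ) {β : ℝ}
    (hβ : 0 ≤ β) {D : Fin ℓ → Matrix (Fin n) (Fin n) ℝ} (hD : Set.range D ⊆ signPatterns Y)
    {m : ℕ} (hm : n + 1 ≤ m) : pStar Y xs β m ≤ dStar Y xs β D := by
  have hfeas : dualFeasible Y D 0 := fun i j => by simp
  refine le_csInf ⟨_, 0, 0, hfeas, hfeas, rfl⟩ ?_
  rintro _ ⟨w, z, hw, hz, rfl⟩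
  exact pStar_le_dualObj Y xs hβ hD hm hw hz

theorem strong_duality_general {n d ℓ : ℕ} (Y : Matrix (Fin n) (Fin d) ℝ) (xs : Fin n → ℝ)
    (β : ℝ) (hβ : 0 < β) (D : Fin ℓ → Matrix (Fin n) (Fin n) ℝ)
    (hrange : Set.range D = signPatterns Y) :
    ∃ mstar ≤ n, ∀ m ≥ mstar + 1, pStar Y xs β m = dStar Y xs β D :=
  ⟨n, le_rfl, fun _ hm => (pStar_le_dStar Y xs hβ.le hrange.le hm).antisymm
    (dStar_le_pStar Y xs hβ.le hrange.ge _)⟩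

/-- **Strong duality.** There exists `m* ≤ n` such that for every
`m ≥ m* + 1`, the primal optimal value with `m` neurons equals the convex dual
optimal value. -/
theorem strong_duality {n d ℓ : ℕ} (Y : Matrix (Fin n) (Fin d) ℝ) (xs : Fin n → ℝ)
    (β : ℝ) (hβ : 0 < β) (D : Fin ℓ → Matrix (Fin n) (Fin n) ℝ)
    (hinj : Function.Injective D) (hrange : Set.range D = signPatterns Y) :
    ∃ mstar ≤ n, ∀ m ≥ mstar + 1, pStar Y xs β m = dStar Y xs β D :=
  strong_duality_general Y xs β hβ D hrange
end

section
/- Let Y ∈ ℝ^{n×d} with n ≥ 2 and r = rank(Y) ≥ 1. Then the number ℓ of distinct ReLU sign-pattern matrices of Y satisfies ℓ ≤ 2r(e(n−1)/r)^r, where e is Euler's number. -/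
open Matrix Finset

/-!
A sign pattern of `Y` is determined by the set `{i | 0 ≤ (Y u)ᵢ}`, the nonnegative set of a
vector `Y u` of the column space `V` of `Y`, a space of dimension `r`. If a set `s` of indices
is shattered by such nonnegative sets, the coordinate functionals on `V` indexed by `s` are
linearly independent: a relation `∑ cᵢ vᵢ = 0` on `V` fails for the `v ∈ V` whose signs on `s`
are those of `c`. So the VC dimension is at most `r`, and the Sauer–Shelah lemma bounds the
number of patterns by `∑_{k ≤ r} (n choose k) ≤ (e n / r)ʳ`. Finally `(n / (n - 1))ʳ ≤ 2 r`
for `r ≤ n`, by induction on `r`.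
-/

section SignSets

variable {𝕜 ι : Type*} [Fintype ι]

noncomputable def nonnegSet [Zero 𝕜] [LinearOrder 𝕜] (v : ι → 𝕜) : Finset ι := {i | 0 ≤ v i}

open scoped Classical in
noncomputable def signSets [Zero 𝕜] [LinearOrder 𝕜] (V : Set (ι → 𝕜)) : Finset (Finset ι) :=
  {t | ∃ v ∈ V, nonnegSet v = t}

variable [Field 𝕜] [LinearOrder 𝕜] [IsStrictOrderedRing 𝕜] [DecidableEq ι]

lemma nonneg_of_sum_mul_eq_zero_of_shatters {V : Set (ι → 𝕜)} {s : Finset ι}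
    (hs : (signSets V).Shatters s) {c : ι → 𝕜} (hc : ∀ v ∈ V, ∑ i ∈ s, c i * v i = 0) :
    ∀ i ∈ s, 0 ≤ c i := by
  by_contra! ⟨i, his, hci⟩
  obtain ⟨t, ht, hst⟩ := hs (filter_subset (fun j => 0 ≤ c j) s)
  obtain ⟨v, hv, rfl⟩ : ∃ v ∈ V, nonnegSet v = t := by simpa [signSets] using ht
  have hsign : ∀ j ∈ s, (0 ≤ v j ↔ 0 ≤ c j) := fun j hj => by
    simpa [nonnegSet, hj] using congrArg (j ∈ ·) hst
  have hterm : ∀ j ∈ s, 0 ≤ c j * v j := fun j hj => by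
    rcases le_or_gt 0 (c j) with h | h
    · exact mul_nonneg h ((hsign j hj).2 h)
    · exact (mul_pos_of_neg_of_neg h (not_le.1 (mt (hsign j hj).1 h.not_ge))).le
  have hpos : 0 < c i * v i :=
    mul_pos_of_neg_of_neg hci (not_le.1 (mt (hsign i his).1 hci.not_ge))
  exact (sum_pos' hterm ⟨i, his, hpos⟩).ne' (hc v hv)

lemma card_le_finrank_of_shatters_signSets {V : Submodule 𝕜 (ι → 𝕜)} {s : Finset ι}
    (hs : (signSets (V : Set (ι → 𝕜))).Shatters s) : #s ≤ Module.finrank 𝕜 V := by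
  let φ : ι → Module.Dual 𝕜 V := fun i => (LinearMap.proj i).comp V.subtype
  have hφ : LinearIndepOn 𝕜 φ (s : Set ι) := by
    refine linearIndepOn_finset_iff.2 fun c hc i hi => ?_
    have hrel : ∀ v ∈ (V : Set (ι → 𝕜)), ∑ j ∈ s, c j * v j = 0 := fun v hv => by
      simpa [φ] using LinearMap.congr_fun hc ⟨v, hv⟩
    have hneg : ∀ v ∈ (V : Set (ι → 𝕜)), ∑ j ∈ s, (-c) j * v j = 0 := fun v hv => by
      simp [neg_mul, sum_neg_distrib, hrel v hv]
    have h₁ := nonneg_of_sum_mul_eq_zero_of_shatters hs hrel i hi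
    have h₂ := nonneg_of_sum_mul_eq_zero_of_shatters hs hneg i hi
    simp only [Pi.neg_apply, neg_nonneg] at h₂
    exact le_antisymm h₂ h₁
  simpa [Subspace.dual_finrank_eq] using hφ.linearIndependent.fintype_card_le_finrank

lemma vcDim_signSets_le_finrank (V : Submodule 𝕜 (ι → 𝕜)) :
    (signSets (V : Set (ι → 𝕜))).vcDim ≤ Module.finrank 𝕜 V :=
  Finset.sup_le fun _ hs => card_le_finrank_of_shatters_signSets (mem_shatterer.1 hs)

lemma card_signSets_le_sum_choose (V : Submodule 𝕜 (ι → 𝕜)) :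
    #(signSets (V : Set (ι → 𝕜))) ≤
      ∑ k ∈ Iic (Module.finrank 𝕜 V), (Fintype.card ι).choose k :=
  calc #(signSets (V : Set (ι → 𝕜)))
      ≤ #(signSets (V : Set (ι → 𝕜))).shatterer := card_le_card_shatterer _
    _ ≤ ∑ k ∈ Iic (signSets (V : Set (ι → 𝕜))).vcDim, (Fintype.card ι).choose k :=
        card_shatterer_le_sum_vcDim
    _ ≤ ∑ k ∈ Iic (Module.finrank 𝕜 V), (Fintype.card ι).choose k :=
        sum_le_sum_of_subset (Iic_subset_Iic.2 (vcDim_signSets_le_finrank V))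

end SignSets

lemma ncard_signPatterns_le_sum_choose {n d : ℕ} (Y : Matrix (Fin n) (Fin d) ℝ) :
    (signPatterns Y).ncard ≤ ∑ k ∈ Iic Y.rank, n.choose k := by
  let V := LinearMap.range Y.mulVecLin
  let diag : Finset (Fin n) → Matrix (Fin n) (Fin n) ℝ :=
    fun t => diagonal fun i => if i ∈ t then 1 else 0
  have hsub : signPatterns Y ⊆ ((signSets (V : Set (Fin n → ℝ))).image diag : Set _) := by
    rintro M ⟨u, -, rfl⟩
    refine mem_image.2 ⟨nonnegSet (Y *ᵥ u), ?_, by simp [diag, nonnegSet]⟩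
    simpa [signSets] using ⟨Y *ᵥ u, ⟨u, rfl⟩, rfl⟩
  calc (signPatterns Y).ncard
      ≤ #((signSets (V : Set (Fin n → ℝ))).image diag) := by
        rw [← Set.ncard_coe_finset]
        exact Set.ncard_le_ncard hsub (finite_toSet _)
    _ ≤ #(signSets (V : Set (Fin n → ℝ))) := card_image_le
    _ ≤ ∑ k ∈ Iic Y.rank, n.choose k := by
        have h := card_signSets_le_sum_choose V
        rwa [Fintype.card_fin] at h

lemma sum_choose_mul_pow_le_one_add_pow {n r : ℕ} (hrn : r ≤ n) {x : ℝ} (hx₀ : 0 ≤ x)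
    (hx₁ : x ≤ 1) : (∑ k ∈ Iic r, (n.choose k : ℝ)) * x ^ r ≤ (1 + x) ^ n :=
  calc (∑ k ∈ Iic r, (n.choose k : ℝ)) * x ^ r
      ≤ ∑ k ∈ Iic r, (n.choose k : ℝ) * x ^ k := by
        rw [sum_mul]
        refine sum_le_sum fun k hk => mul_le_mul_of_nonneg_left ?_ (by positivity)
        exact pow_le_pow_of_le_one hx₀ hx₁ (mem_Iic.1 hk)
    _ ≤ ∑ k ∈ range (n + 1), (n.choose k : ℝ) * x ^ k := by
        refine sum_le_sum_of_subset_of_nonneg (fun k hk => ?_) fun k _ _ => by positivity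
        exact mem_range.2 (Nat.lt_succ_of_le ((mem_Iic.1 hk).trans hrn))
    _ = (1 + x) ^ n := by
        rw [add_comm 1 x, add_pow]
        simp only [one_pow, mul_one, mul_comm]

lemma sum_choose_le_exp_one_mul_div_pow {n r : ℕ} (hr : 0 < r) (hrn : r ≤ n) :
    (∑ k ∈ Iic r, (n.choose k : ℝ)) ≤ (Real.exp 1 * n / r) ^ r := by
  have hn : (0 : ℝ) < n := by exact_mod_cast hr.trans_le hrn
  set x : ℝ := r / n with hx
  have hx₀ : 0 < x := by positivity
  have hx₁ : x ≤ 1 := div_le_one_of_le₀ (by exact_mod_cast hrn) hn.le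
  -- `x = r / n` minimises `exp (n x) / xʳ`
  have hexp : (1 + x) ^ n ≤ Real.exp 1 ^ r :=
    calc (1 + x) ^ n ≤ Real.exp x ^ n := by
          gcongr
          linarith [Real.add_one_le_exp x]
      _ = Real.exp 1 ^ r := by
          rw [← Real.exp_nat_mul, ← Real.exp_nat_mul, hx, mul_div_cancel₀ _ hn.ne', mul_one]
  calc (∑ k ∈ Iic r, (n.choose k : ℝ))
      ≤ Real.exp 1 ^ r / x ^ r :=
        (le_div_iff₀ (by positivity)).2
          ((sum_choose_mul_pow_le_one_add_pow hrn hx₀.le hx₁).trans hexp)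
    _ = (Real.exp 1 * n / r) ^ r := by
        rw [← div_pow, hx, div_div_eq_mul_div]

lemma add_one_pow_le_two_mul_mul_pow {m : ℝ} (hm : 1 ≤ m) {r : ℕ} (hr : 1 ≤ r)
    (hrm : (r : ℝ) ≤ m + 1) : (m + 1) ^ r ≤ 2 * r * m ^ r := by
  induction r, hr using Nat.le_induction with
  | base => norm_num; linarith
  | succ k hk ih =>
    push_cast at hrm ⊢
    have hkm : (k : ℝ) ≤ m := by linarith
    have hmk : 0 ≤ m ^ k := by positivity
    calc (m + 1) ^ (k + 1) = (m + 1) ^ k * (m + 1) := pow_succ _ _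
      _ ≤ 2 * k * m ^ k * (m + 1) := by gcongr; exact ih (by linarith)
      _ = 2 * k * m ^ (k + 1) + 2 * k * m ^ k := by ring
      _ ≤ 2 * k * m ^ (k + 1) + 2 * m ^ (k + 1) := by
          rw [pow_succ]; nlinarith
      _ = 2 * (k + 1) * m ^ (k + 1) := by ring

/-- **Sign-pattern count bound.** For `n ≥ 2` and `r = rank(Y) ≥ 1`,
the number `ℓ` of distinct ReLU sign-pattern matrices of `Y` satisfies
`ℓ ≤ 2r(e(n−1)/r)^r`. -/
theorem sign_pattern_count_bound {n d : ℕ} (Y : Matrix (Fin n) (Fin d) ℝ)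
    (hn : 2 ≤ n) (hr : 1 ≤ Y.rank) :
    ((signPatterns Y).ncard : ℝ) ≤
      2 * (Y.rank : ℝ) * (Real.exp 1 * ((n : ℝ) - 1) / (Y.rank : ℝ)) ^ (Y.rank : ℕ) := by
  set r := Y.rank
  have hrn : r ≤ n := by simpa using Y.rank_le_card_height
  have hn' : (2 : ℝ) ≤ n := by exact_mod_cast hn
  have hpow : (n : ℝ) ^ r ≤ 2 * r * ((n : ℝ) - 1) ^ r := by
    simpa using add_one_pow_le_two_mul_mul_pow (m := (n : ℝ) - 1) (by linarith) hr
      (by simpa using (Nat.cast_le (α := ℝ)).2 hrn)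
  calc ((signPatterns Y).ncard : ℝ)
      ≤ ∑ k ∈ Iic r, (n.choose k : ℝ) := by exact_mod_cast ncard_signPatterns_le_sum_choose Y
    _ ≤ (Real.exp 1 / r) ^ r * (n : ℝ) ^ r := by
        rw [← mul_pow, div_mul_eq_mul_div]
        exact sum_choose_le_exp_one_mul_div_pow hr hrn
    _ ≤ (Real.exp 1 / r) ^ r * (2 * r * ((n : ℝ) - 1) ^ r) := by gcongr
    _ = 2 * r * (Real.exp 1 * ((n : ℝ) - 1) / r) ^ r := by
        rw [mul_div_right_comm, mul_pow]; ring
end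

section
/- Let Y ∈ ℝ^{n×d}, x* ∈ ℝ^n, β > 0, and let D_1, …, D_ℓ be the ReLU sign-pattern matrices of Y. Then for every m ≥ 1, the convex dual optimal value d* is a lower bound on the primal optimal value: d* ≤ p*_m. -/
/-!
Every network `(uⱼ, vⱼ)` yields a dual-feasible point with no larger objective. Neuron `j` acts
through its own pattern `Dⱼ = Diag(1_{Y uⱼ ≥ 0})`: `(Y uⱼ)₊ = Dⱼ Y uⱼ` and `(2Dⱼ - I) Y uⱼ ≥ 0`.
Grouping the neurons by pattern and splitting `vⱼ = vⱼ⁺ - vⱼ⁻`, the points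
`wᵢ = ∑ vⱼ⁺ uⱼ` and `zᵢ = ∑ vⱼ⁻ uⱼ` are dual feasible with the same fit, and by the triangle
inequality and AM-GM `∑ (‖wᵢ‖ + ‖zᵢ‖) ≤ ∑ |vⱼ| ‖uⱼ‖ ≤ ½ ∑ (‖uⱼ‖² + vⱼ²)`.
-/

open Matrix Finset

namespace WeakDuality

section l2

variable {k : ℕ}

lemma l2_eq_norm (x : Fin k → ℝ) : l2 x = ‖WithLp.toLp 2 x‖ := by
  simp [l2, EuclideanSpace.norm_eq]

lemma l2_nonneg (x : Fin k → ℝ) : 0 ≤ l2 x := Real.sqrt_nonneg _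

lemma l2_smul (c : ℝ) (x : Fin k → ℝ) : l2 (c • x) = |c| * l2 x := by
  rw [l2_eq_norm, l2_eq_norm, WithLp.toLp_smul, norm_smul, Real.norm_eq_abs]

lemma l2_sum_smul_le {ι : Type*} (s : Finset ι) (c : ι → ℝ) (f : ι → Fin k → ℝ)
    (hc : ∀ j ∈ s, 0 ≤ c j) :
    l2 (∑ j ∈ s, c j • f j) ≤ ∑ j ∈ s, c j * l2 (f j) := by
  calc l2 (∑ j ∈ s, c j • f j)
      = ‖∑ j ∈ s, WithLp.toLp 2 (c j • f j)‖ := by rw [l2_eq_norm, WithLp.toLp_sum]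
    _ ≤ ∑ j ∈ s, ‖WithLp.toLp 2 (c j • f j)‖ := norm_sum_le _ _
    _ = ∑ j ∈ s, c j * l2 (f j) := sum_congr rfl fun j hj => by
        rw [← l2_eq_norm, l2_smul, abs_of_nonneg (hc j hj)]

end l2

lemma nonneg_mulVec_sum_smul {ι p q : Type*} [Fintype q] (A : Matrix p q ℝ) (s : Finset ι)
    (c : ι → ℝ) (g : ι → q → ℝ) (hc : ∀ j ∈ s, 0 ≤ c j) (hg : ∀ j ∈ s, 0 ≤ A *ᵥ g j) :
    0 ≤ A *ᵥ ∑ j ∈ s, c j • g j := by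
  rw [mulVec_sum]
  exact sum_nonneg fun j hj => by
    rw [mulVec_smul]
    exact smul_nonneg (hc j hj) (hg j hj)

section signPattern

variable {n d : ℕ} (Y : Matrix (Fin n) (Fin d) ℝ)

noncomputable def signPatternOf (u : Fin d → ℝ) : Matrix (Fin n) (Fin n) ℝ :=
  diagonal fun i => if 0 ≤ (Y *ᵥ u) i then 1 else 0

lemma signPatternOf_smul_of_pos {c : ℝ} (hc : 0 < c) (u : Fin d → ℝ) :
    signPatternOf Y (c • u) = signPatternOf Y u := by
  simp only [signPatternOf, mulVec_smul, Pi.smul_apply, smul_eq_mul,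
    mul_nonneg_iff_of_pos_left hc]

lemma signPatternOf_mem_signPatterns (u : Fin d → ℝ) :
    signPatternOf Y u ∈ signPatterns Y := by
  set c := max (l2 u) 1
  have hc : 0 < c := lt_of_lt_of_le one_pos (le_max_right _ _)
  refine ⟨c⁻¹ • u, ?_, (signPatternOf_smul_of_pos Y (inv_pos.mpr hc) u).symm⟩
  rw [l2_smul, abs_of_pos (inv_pos.mpr hc), inv_mul_le_one₀ hc]
  exact le_max_left _ _

lemma signPatternOf_mulVec (u : Fin d → ℝ) :
    signPatternOf Y u *ᵥ (Y *ᵥ u) = relu (Y *ᵥ u) := by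
  funext i
  rw [signPatternOf, mulVec_diagonal, relu]
  split_ifs with h
  · simp [h]
  · simp [(not_le.mp h).le]

lemma two_smul_signPatternOf_sub_one_mulVec_nonneg (u : Fin d → ℝ) :
    0 ≤ (2 • signPatternOf Y u - 1) *ᵥ (Y *ᵥ u) := by
  intro i
  simp only [sub_mulVec, smul_mulVec, one_mulVec, signPatternOf, mulVec_diagonal,
    Pi.sub_apply, Pi.smul_apply, Pi.zero_apply]
  split_ifs with h <;> simp <;> linarith

end signPattern

section lift

variable {n d ℓ m : ℕ} (Y : Matrix (Fin n) (Fin d) ℝ) (D : Fin ℓ → Matrix (Fin n) (Fin n) ℝ)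
  (idx : Fin m → Fin ℓ) (u : Fin m → Fin d → ℝ)

def lift (c : Fin m → ℝ) : Fin ℓ → Fin d → ℝ :=
  fun i => ∑ j with idx j = i, c j • u j

lemma lift_sub (a b : Fin m → ℝ) (i : Fin ℓ) :
    lift idx u a i - lift idx u b i = lift idx u (a - b) i := by
  simp only [lift, ← sum_sub_distrib, ← sub_smul, Pi.sub_apply]

variable {Y D idx u}

lemma dualFeasible_lift (hidx : ∀ j, D (idx j) = signPatternOf Y (u j))
    {c : Fin m → ℝ} (hc : 0 ≤ c) : dualFeasible Y D (lift idx u c) := by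
  intro i
  rw [lift, mulVec_mulVec]
  refine nonneg_mulVec_sum_smul _ _ _ _ (fun j _ => hc j) fun j hj => ?_
  rw [← mulVec_mulVec, ← (mem_filter.mp hj).2, hidx]
  exact two_smul_signPatternOf_sub_one_mulVec_nonneg Y (u j)

lemma sum_mulVec_lift (hidx : ∀ j, D (idx j) = signPatternOf Y (u j)) (c : Fin m → ℝ) :
    ∑ i, D i *ᵥ (Y *ᵥ lift idx u c i) = ∑ j, c j • relu (Y *ᵥ u j) := by
  rw [← sum_fiberwise univ idx]
  refine sum_congr rfl fun i _ => ?_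
  simp only [lift, mulVec_sum, mulVec_smul]
  refine sum_congr rfl fun j hj => ?_
  rw [← (mem_filter.mp hj).2, hidx, signPatternOf_mulVec]

lemma sum_l2_lift_le {c : Fin m → ℝ} (hc : 0 ≤ c) :
    ∑ i, l2 (lift idx u c i) ≤ ∑ j, c j * l2 (u j) := by
  rw [← sum_fiberwise univ idx]
  exact sum_le_sum fun i _ => l2_sum_smul_le _ _ _ fun j _ => hc j

lemma dualObj_lift_le_primalObj {xs : Fin n → ℝ} {β : ℝ} (hβ : 0 ≤ β)
    (hidx : ∀ j, D (idx j) = signPatternOf Y (u j)) (v : Fin m → ℝ) :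
    dualObj Y xs β D (lift idx u (v⁺)) (lift idx u (v⁻)) ≤ primalObj Y xs β m u v := by
  have hfit : ∑ i, D i *ᵥ (Y *ᵥ (lift idx u (v⁺) i - lift idx u (v⁻) i))
      = ∑ j, v j • relu (Y *ᵥ u j) := by
    simp only [lift_sub, posPart_sub_negPart, sum_mulVec_lift hidx]
  have hreg : ∑ i, (l2 (lift idx u (v⁺) i) + l2 (lift idx u (v⁻) i))
      ≤ (1 / 2) * ∑ j, (l2 (u j) ^ 2 + |v j| ^ 2) :=
    calc ∑ i, (l2 (lift idx u (v⁺) i) + l2 (lift idx u (v⁻) i))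
        ≤ ∑ j, (v j)⁺ * l2 (u j) + ∑ j, (v j)⁻ * l2 (u j) := by
          rw [sum_add_distrib]
          exact add_le_add (sum_l2_lift_le (posPart_nonneg v))
            (sum_l2_lift_le (negPart_nonneg v))
      _ = ∑ j, |v j| * l2 (u j) := by
          simp only [← sum_add_distrib, ← add_mul, posPart_add_negPart]
      _ ≤ (1 / 2) * ∑ j, (l2 (u j) ^ 2 + |v j| ^ 2) := by
          rw [mul_sum]
          exact sum_le_sum fun j _ => by nlinarith [two_mul_le_add_sq (|v j|) (l2 (u j))]
  rw [dualObj, primalObj, hfit]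
  nlinarith [mul_le_mul_of_nonneg_left hreg hβ]

end lift

lemma dualObj_nonneg {n d ℓ : ℕ} (Y : Matrix (Fin n) (Fin d) ℝ) (xs : Fin n → ℝ) {β : ℝ}
    (hβ : 0 ≤ β) (D : Fin ℓ → Matrix (Fin n) (Fin n) ℝ) (w z : Fin ℓ → Fin d → ℝ) :
    0 ≤ dualObj Y xs β D w z := by
  unfold dualObj
  have := sum_nonneg fun i (_ : i ∈ univ) => add_nonneg (l2_nonneg (w i)) (l2_nonneg (z i))
  positivity

end WeakDuality

open WeakDuality in
theorem weak_duality_general {n d ℓ : ℕ} (Y : Matrix (Fin n) (Fin d) ℝ) (xs : Fin n → ℝ)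
    (β : ℝ) (hβ : 0 < β) (D : Fin ℓ → Matrix (Fin n) (Fin n) ℝ)
    (hrange : Set.range D = signPatterns Y) :
    ∀ m, 1 ≤ m → dStar Y xs β D ≤ pStar Y xs β m := by
  intro m _
  refine le_csInf ⟨_, 0, 0, rfl⟩ ?_
  rintro _ ⟨u, v, rfl⟩
  have hpattern : ∀ j, signPatternOf Y (u j) ∈ Set.range D := fun j =>
    hrange ▸ signPatternOf_mem_signPatterns Y (u j)
  choose idx hidx using hpattern
  have hbdd : BddBelow { c | ∃ w z : Fin ℓ → Fin d → ℝ,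
      dualFeasible Y D w ∧ dualFeasible Y D z ∧ c = dualObj Y xs β D w z } :=
    ⟨0, by rintro _ ⟨w, z, -, -, rfl⟩; exact dualObj_nonneg Y xs hβ.le D w z⟩
  exact (csInf_le hbdd ⟨_, _, dualFeasible_lift hidx (posPart_nonneg v),
    dualFeasible_lift hidx (negPart_nonneg v), rfl⟩).trans
    (dualObj_lift_le_primalObj hβ.le hidx v)

/-- **Weak duality.** The convex dual optimal value `d*` is a lower
bound on the primal optimal value `p*_m` for every `m ≥ 1`. -/
theorem weak_duality {n d ℓ : ℕ} (Y : Matrix (Fin n) (Fin d) ℝ) (xs : Fin n → ℝ)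
    (β : ℝ) (hβ : 0 < β) (D : Fin ℓ → Matrix (Fin n) (Fin n) ℝ)
    (hinj : Function.Injective D) (hrange : Set.range D = signPatterns Y) :
    ∀ m, 1 ≤ m → dStar Y xs β D ≤ pStar Y xs β m :=
  weak_duality_general Y xs β hβ D hrange
end
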